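/- In genus 1, the fourth powers of the three even theta nullwerte satisfy Jacobi's identity: theta[0;0](tau)^4 = theta[0;1](tau)^4 + theta[1;0](tau)^4 for all tau in the upper half plane. -/

import Mathlib

/-!
Write `θ[c,d](t) = ∑ₙ exp(π i t (n + c)² + 2π i (n + c) d)`, so that `θ[a;b] = θ[a/2, b/2]`.
The substitution `(n, m) = (r + s + ε, r - s)`, `ε ∈ {0, 1}` the parity of `n + m`, is a bijection
`ℤ² ⊔ ℤ² ≃ ℤ²`, and `(n + c)² + (m + c')² = 2 (r + (c + c' + ε)/2)² + 2 (s + (c - c' + ε)/2)²`.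
Hence, by absolute convergence, `θ[c,d](t) θ[c',d'](t)` is a sum of two products of thetas at `2t`.
With `A = θ[0,0](2t)` and `B = θ[1/2,0](2t)` this gives
`θ[0,0]² = A² + B²`, `θ[0,1/2]² = A² - B²`, `θ[1/2,0]² = 2AB`, and `(A² + B²)² - (A² - B²)² = (2AB)²`.
-/

open scoped Real

/-- The theta nullwert with characteristic `(a;b)` in genus 1:
`θ[a;b](τ) = ∑_{p ∈ ℤ} exp(π i τ (p + a/2)² + π i (p + a/2) b)`. -/
noncomputable def thetaNull (a b : ℤ) (τ : UpperHalfPlane) : ℂ :=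
  ∑' p : ℤ, Complex.exp (π * Complex.I * (τ : ℂ) * ((p : ℂ) + a / 2) ^ 2
    + π * Complex.I * ((p : ℂ) + a / 2) * b)

open Complex

def Int.paritySplitEquiv : (ℤ × ℤ) ⊕ (ℤ × ℤ) ≃ ℤ × ℤ where
  toFun := Sum.elim (fun p => (p.1 + p.2, p.1 - p.2)) (fun p => (p.1 + p.2 + 1, p.1 - p.2))
  invFun p :=
    if (p.1 + p.2) % 2 = 0 then .inl ((p.1 + p.2) / 2, (p.1 - p.2) / 2)
    else .inr ((p.1 + p.2 - 1) / 2, (p.1 - p.2 - 1) / 2)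
  left_inv := by
    rintro (⟨r, s⟩ | ⟨r, s⟩) <;> dsimp only [Sum.elim_inl, Sum.elim_inr] <;> split_ifs
    all_goals first | omega | (simp only [Sum.inl.injEq, Sum.inr.injEq, Prod.mk.injEq]; omega)
  right_inv := by
    rintro ⟨n, m⟩
    dsimp only
    split_ifs <;> simp only [Sum.elim_inl, Sum.elim_inr, Prod.mk.injEq] <;> omega

theorem tsum_mul_tsum_eq_parity_split {R : Type*} [NormedCommRing R] [CompleteSpace R]
    {f g : ℤ → R} (hf : Summable fun n => ‖f n‖) (hg : Summable fun n => ‖g n‖) :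
    (∑' n, f n) * (∑' n, g n) =
      (∑' p : ℤ × ℤ, f (p.1 + p.2) * g (p.1 - p.2)) +
        ∑' p : ℤ × ℤ, f (p.1 + p.2 + 1) * g (p.1 - p.2) := by
  have hfg := Int.paritySplitEquiv.summable_iff.mpr (summable_mul_of_summable_norm hf hg)
  rw [tsum_mul_tsum_of_summable_norm hf hg, ← Int.paritySplitEquiv.tsum_eq]
  refine (Summable.tsum_sum (hfg.comp_injective Sum.inl_injective)
      (hfg.comp_injective Sum.inr_injective)).trans ?_
  rfl

noncomputable def thetaCharTerm (c d t : ℂ) (n : ℤ) : ℂ :=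
  cexp (π * I * t * (n + c) ^ 2 + 2 * π * I * (n + c) * d)

noncomputable def thetaChar (c d t : ℂ) : ℂ :=
  ∑' n : ℤ, thetaCharTerm c d t n

theorem thetaCharTerm_eq_mul_jacobiTheta₂_term (c d t : ℂ) (n : ℤ) :
    thetaCharTerm c d t n =
      cexp (π * I * t * c ^ 2 + 2 * π * I * c * d) * jacobiTheta₂_term n (c * t + d) t := by
  rw [thetaCharTerm, jacobiTheta₂_term, ← Complex.exp_add]
  ring_nf

theorem summable_norm_thetaCharTerm (c d : ℂ) {t : ℂ} (ht : 0 < t.im) :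
    Summable fun n => ‖thetaCharTerm c d t n‖ := by
  simp only [thetaCharTerm_eq_mul_jacobiTheta₂_term, norm_mul]
  exact ((summable_jacobiTheta₂_term_iff _ t).mpr ht).norm.mul_left _

theorem thetaCharTerm_mul_thetaCharTerm (c c' d d' t : ℂ) (k r s : ℤ) :
    thetaCharTerm c d t (r + s + k) * thetaCharTerm c' d' t (r - s) =
      thetaCharTerm ((c + c' + k) / 2) (d + d') (2 * t) r *
        thetaCharTerm ((c - c' + k) / 2) (d - d') (2 * t) s := by
  simp only [thetaCharTerm, ← Complex.exp_add]
  push_cast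
  ring_nf

theorem thetaChar_mul_thetaChar (c c' d d' : ℂ) {t : ℂ} (ht : 0 < t.im) :
    thetaChar c d t * thetaChar c' d' t =
      thetaChar ((c + c') / 2) (d + d') (2 * t) * thetaChar ((c - c') / 2) (d - d') (2 * t) +
        thetaChar ((c + c' + 1) / 2) (d + d') (2 * t) *
          thetaChar ((c - c' + 1) / 2) (d - d') (2 * t) := by
  have h2t : 0 < (2 * t).im := by simpa using ht
  simp only [thetaChar]
  rw [tsum_mul_tsum_eq_parity_split (summable_norm_thetaCharTerm c d ht)
      (summable_norm_thetaCharTerm c' d' ht),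
    tsum_mul_tsum_of_summable_norm (summable_norm_thetaCharTerm _ _ h2t)
      (summable_norm_thetaCharTerm _ _ h2t),
    tsum_mul_tsum_of_summable_norm (summable_norm_thetaCharTerm _ _ h2t)
      (summable_norm_thetaCharTerm _ _ h2t)]
  congr 1 <;> refine tsum_congr fun p => ?_
  · simpa using thetaCharTerm_mul_thetaCharTerm c c' d d' t 0 p.1 p.2
  · simpa using thetaCharTerm_mul_thetaCharTerm c c' d d' t 1 p.1 p.2

theorem thetaChar_add_one_left (c d t : ℂ) : thetaChar (c + 1) d t = thetaChar c d t := by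
  rw [thetaChar, thetaChar, ← (Equiv.addRight (1 : ℤ)).tsum_eq (thetaCharTerm c d t)]
  refine tsum_congr fun n => ?_
  simp only [thetaCharTerm, Equiv.coe_addRight]
  push_cast
  ring_nf

theorem thetaChar_add_one_right (c d t : ℂ) :
    thetaChar c (d + 1) t = cexp (2 * π * I * c) * thetaChar c d t := by
  rw [thetaChar, thetaChar, ← tsum_mul_left]
  refine tsum_congr fun n => ?_
  rw [thetaCharTerm, thetaCharTerm, ← Complex.exp_add, Complex.exp_eq_exp_iff_exists_int]
  exact ⟨n, by ring⟩

theorem thetaNull_eq_thetaChar (a b : ℤ) (τ : UpperHalfPlane) :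
    thetaNull a b τ = thetaChar (a / 2) (b / 2) τ := by
  refine tsum_congr fun n => ?_
  rw [thetaCharTerm]
  ring_nf

section Doubling

variable {t : ℂ}

theorem thetaChar_zero_zero_sq (ht : 0 < t.im) :
    thetaChar 0 0 t ^ 2 = thetaChar 0 0 (2 * t) ^ 2 + thetaChar (1 / 2) 0 (2 * t) ^ 2 := by
  have h := thetaChar_mul_thetaChar 0 0 0 0 ht
  norm_num at h
  linear_combination h

theorem thetaChar_zero_half_sq (ht : 0 < t.im) :
    thetaChar 0 (1 / 2) t ^ 2 = thetaChar 0 0 (2 * t) ^ 2 - thetaChar (1 / 2) 0 (2 * t) ^ 2 := by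
  have h := thetaChar_mul_thetaChar 0 0 (1 / 2) (1 / 2) ht
  have hA := thetaChar_add_one_right 0 0 (2 * t)
  have hB := thetaChar_add_one_right (1 / 2) 0 (2 * t)
  rw [show 2 * π * I * (1 / 2) = π * I by ring, exp_pi_mul_I] at hB
  norm_num at h hA hB
  rw [hA, hB] at h
  linear_combination h

theorem thetaChar_half_zero_sq (ht : 0 < t.im) :
    thetaChar (1 / 2) 0 t ^ 2 = 2 * thetaChar 0 0 (2 * t) * thetaChar (1 / 2) 0 (2 * t) := by
  have h := thetaChar_mul_thetaChar (1 / 2) (1 / 2) 0 0 ht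
  have hA := thetaChar_add_one_left 0 0 (2 * t)
  norm_num at h hA
  rw [hA] at h
  linear_combination h

theorem thetaChar_zero_zero_pow_four (ht : 0 < t.im) :
    thetaChar 0 0 t ^ 4 = thetaChar 0 (1 / 2) t ^ 4 + thetaChar (1 / 2) 0 t ^ 4 := by
  have h₀₀ := thetaChar_zero_zero_sq ht
  have h₀₁ := thetaChar_zero_half_sq ht
  have h₁₀ := thetaChar_half_zero_sq ht
  set A := thetaChar 0 0 (2 * t)
  set B := thetaChar (1 / 2) 0 (2 * t)
  linear_combination (thetaChar 0 0 t ^ 2 + A ^ 2 + B ^ 2) * h₀₀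
    - (thetaChar 0 (1 / 2) t ^ 2 + A ^ 2 - B ^ 2) * h₀₁
    - (thetaChar (1 / 2) 0 t ^ 2 + 2 * A * B) * h₁₀

end Doubling

/-- Jacobi's identity
`θ[0;0]⁴ = θ[0;1]⁴ + θ[1;0]⁴` on the upper half plane. -/
theorem jacobi_identity (τ : UpperHalfPlane) :
    thetaNull 0 0 τ ^ 4 = thetaNull 0 1 τ ^ 4 + thetaNull 1 0 τ ^ 4 := by
  simpa [thetaNull_eq_thetaChar] using thetaChar_zero_zero_pow_four τ.im_pos
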